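/- Let G be a SIN group, B ⊆ LUC(G)* a norm-bounded set, m₀ ∈ LUC(G)*, and n₀ ∈ B. Then the convolution map (m, n) ↦ m ∗ n from LUC(G)* × B to LUC(G)* is jointly continuous at (m₀, n₀) when all spaces carry the UEB topology; that is, if m_α → m₀ and n_α → n₀ in the UEB topology with n_α ∈ B, then m_α ∗ n_α → m₀ ∗ n₀ in the UEB topology. -/

import Mathlib

noncomputable section
set_option linter.unusedSectionVars false

open Filter Topology MeasureTheory BoundedContinuousFunction

section Defs

variable (G : Type*) [Group G] [TopologicalSpace G] [IsTopologicalGroup G]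

/-- A bounded left uniformly continuous function on a topological group. -/
def IsLUCFun (f : G → ℂ) : Prop :=
  (∃ C, ∀ s, ‖f s‖ ≤ C) ∧
    ∀ ε > 0, ∃ U ∈ 𝓝 (1 : G), ∀ s t : G, s * t⁻¹ ∈ U → ‖f s - f t‖ < ε

/-- A set of functions is equi-LUC if it is uniformly bounded in the sup norm and
equi-uniformly continuous for the right uniformity. -/
def EquiLUCFun (F : Set (G → ℂ)) : Prop :=
  (∃ C, ∀ f ∈ F, ∀ s, ‖f s‖ ≤ C) ∧
    ∀ ε > 0, ∃ U ∈ 𝓝 (1 : G), ∀ f ∈ F, ∀ s t : G, s * t⁻¹ ∈ U → ‖f s - f t‖ < ε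

/-- A SIN group: there is a base of neighbourhoods of the identity that are
invariant under all inner automorphisms. -/
def IsSIN : Prop :=
  ∀ U ∈ 𝓝 (1 : G), ∃ V ∈ 𝓝 (1 : G), V ⊆ U ∧ ∀ x : G, ∀ v ∈ V, x * v * x⁻¹ ∈ V

end Defs

section LUCSpace

variable (G : Type*) [Group G] [TopologicalSpace G] [IsTopologicalGroup G]

/-- The space `LUC(G)` of bounded left uniformly continuous complex functions on `G`,
as a subspace of the bounded continuous functions with the sup norm. -/
def LUC : Submodule ℂ (G →ᵇ ℂ) where
  carrier := {f | ∀ ε > 0, ∃ U ∈ 𝓝 (1 : G), ∀ s t : G, s * t⁻¹ ∈ U → ‖f s - f t‖ < ε}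
  zero_mem' := fun ε hε => ⟨Set.univ, Filter.univ_mem, fun s t _ => by simpa using hε⟩
  add_mem' := by
    intro f g hf hg ε hε
    obtain ⟨U, hU, hUf⟩ := hf (ε / 2) (by linarith)
    obtain ⟨V, hV, hVg⟩ := hg (ε / 2) (by linarith)
    refine ⟨U ∩ V, Filter.inter_mem hU hV, fun s t hst => ?_⟩
    have h1 := hUf s t hst.1
    have h2 := hVg s t hst.2
    have e : (f + g) s - (f + g) t = (f s - f t) + (g s - g t) := by
      simp only [BoundedContinuousFunction.coe_add, Pi.add_apply]; ring
    calc ‖(f + g) s - (f + g) t‖ ≤ ‖f s - f t‖ + ‖g s - g t‖ := by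
          rw [e]; exact norm_add_le _ _
      _ < ε := by linarith
  smul_mem' := by
    intro c f hf ε hε
    obtain ⟨U, hU, hUf⟩ := hf (ε / (‖c‖ + 1)) (by positivity)
    refine ⟨U, hU, fun s t hst => ?_⟩
    have h := hUf s t hst
    have e : (c • f) s - (c • f) t = c * (f s - f t) := by
      simp only [BoundedContinuousFunction.coe_smul, Pi.smul_apply, smul_eq_mul]; ring
    rw [e, norm_mul]
    calc ‖c‖ * ‖f s - f t‖ ≤ ‖c‖ * (ε / (‖c‖ + 1)) :=
          mul_le_mul_of_nonneg_left h.le (norm_nonneg c)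
      _ < (‖c‖ + 1) * (ε / (‖c‖ + 1)) :=
          mul_lt_mul_of_pos_right (by linarith) (by positivity)
      _ = ε := by field_simp

/-- Equi-LUC subsets of the space `LUC(G)`. -/
def EquiLUC (F : Set ↥(LUC G)) : Prop :=
  (∃ C, ∀ f ∈ F, ‖f‖ ≤ C) ∧
    ∀ ε > 0, ∃ U ∈ 𝓝 (1 : G), ∀ f ∈ F, ∀ s t : G,
      s * t⁻¹ ∈ U → ‖(f : G →ᵇ ℂ) s - (f : G →ᵇ ℂ) t‖ < ε

variable {G}

lemma lTrans_mem (s : G) {f : G →ᵇ ℂ} (hf : f ∈ LUC G) :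
    f.compContinuous ⟨fun x => s * x, by continuity⟩ ∈ LUC G := by
  intro ε hε
  obtain ⟨U, hU, hUf⟩ := hf ε hε
  refine ⟨(fun u => s * u * s⁻¹) ⁻¹' U, ?_, ?_⟩
  · have hc : ContinuousAt (fun u : G => s * u * s⁻¹) 1 := by fun_prop
    exact hc.preimage_mem_nhds (by simpa using hU)
  · intro x y hxy
    have h' : (s * x) * (s * y)⁻¹ ∈ U := by
      have h'' : s * (x * y⁻¹) * s⁻¹ ∈ U := hxy
      simpa [mul_inv_rev, mul_assoc] using h''
    exact hUf (s * x) (s * y) h'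

/-- Left translation `ℓ_s f (x) = f (s x)` on `LUC(G)`. -/
def lTrans (s : G) (f : ↥(LUC G)) : ↥(LUC G) :=
  ⟨(f : G →ᵇ ℂ).compContinuous ⟨fun x => s * x, by continuity⟩, lTrans_mem s f.2⟩

@[simp] lemma lTrans_apply (s : G) (f : ↥(LUC G)) (x : G) :
    ((lTrans s f : ↥(LUC G)) : G →ᵇ ℂ) x = (f : G →ᵇ ℂ) (s * x) := rfl

variable (G) in
/-- The dual Banach space `LUC(G)*`. -/
abbrev LUCDual := StrongDual ℂ ↥(LUC G)

lemma lTrans_norm_le (s : G) (f : ↥(LUC G)) : ‖lTrans s f‖ ≤ ‖f‖ :=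
  BoundedContinuousFunction.norm_compContinuous_le _ _

lemma lTrans_add (s : G) (f g : ↥(LUC G)) :
    lTrans s (f + g) = lTrans s f + lTrans s g := by
  apply Subtype.ext; ext x; rfl

lemma lTrans_smul (s : G) (c : ℂ) (f : ↥(LUC G)) :
    lTrans s (c • f) = c • lTrans s f := by
  apply Subtype.ext; ext x; rfl

lemma luccond_continuous {g : G → ℂ}
    (h : ∀ ε > 0, ∃ U ∈ 𝓝 (1 : G), ∀ s t : G, s * t⁻¹ ∈ U → ‖g s - g t‖ < ε) :
    Continuous g := by
  rw [continuous_iff_continuousAt]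
  intro t
  rw [ContinuousAt, Metric.tendsto_nhds]
  intro ε hε
  obtain ⟨U, hU, hUf⟩ := h ε hε
  have hmem : {s : G | s * t⁻¹ ∈ U} ∈ 𝓝 t := by
    have hc : ContinuousAt (fun s : G => s * t⁻¹) t := by fun_prop
    exact hc.preimage_mem_nhds (by simpa using hU)
  filter_upwards [hmem] with s hs
  rw [dist_eq_norm]
  exact hUf s t hs

lemma rAct_cond (n : LUCDual G) (f : ↥(LUC G)) :
    ∀ ε > 0, ∃ U ∈ 𝓝 (1 : G), ∀ s t : G, s * t⁻¹ ∈ U →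
      ‖n (lTrans s f) - n (lTrans t f)‖ < ε := by
  intro ε hε
  set δ := ε / (2 * (‖n‖ + 1)) with hδdef
  have hδ : 0 < δ := by positivity
  obtain ⟨U, hU, hUf⟩ := f.2 δ hδ
  refine ⟨U, hU, fun s t hst => ?_⟩
  have hdiff : ‖lTrans s f - lTrans t f‖ ≤ δ := by
    have : ‖((lTrans s f : ↥(LUC G)) : G →ᵇ ℂ) - ((lTrans t f : ↥(LUC G)) : G →ᵇ ℂ)‖ ≤ δ := by
      apply BoundedContinuousFunction.norm_le hδ.le |>.2
      intro x
      have hx : (s * x) * (t * x)⁻¹ ∈ U := by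
        simpa [mul_inv_rev, mul_assoc] using hst
      simpa using (hUf (s * x) (t * x) hx).le
    exact this
  calc ‖n (lTrans s f) - n (lTrans t f)‖ = ‖n (lTrans s f - lTrans t f)‖ := by
        rw [map_sub]
    _ ≤ ‖n‖ * ‖lTrans s f - lTrans t f‖ := n.le_opNorm _
    _ ≤ ‖n‖ * δ := mul_le_mul_of_nonneg_left hdiff (norm_nonneg n)
    _ < (‖n‖ + 1) * δ := mul_lt_mul_of_pos_right (by linarith) hδ
    _ = ε / 2 := by rw [hδdef]; field_simp
    _ < ε := by linarith

/-- The function `r_n f : s ↦ n (ℓ_s f)`, as an element of `LUC(G)`. -/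
def rAct (n : LUCDual G) (f : ↥(LUC G)) : ↥(LUC G) :=
  ⟨BoundedContinuousFunction.ofNormedAddCommGroup (fun s => n (lTrans s f))
      (luccond_continuous (rAct_cond n f))
      (‖n‖ * ‖f‖)
      (fun s => by
        calc ‖n (lTrans s f)‖ ≤ ‖n‖ * ‖lTrans s f‖ := n.le_opNorm _
          _ ≤ ‖n‖ * ‖f‖ := mul_le_mul_of_nonneg_left (lTrans_norm_le s f) (norm_nonneg n)),
   fun ε hε => by
      obtain ⟨U, hU, h⟩ := rAct_cond n f ε hε
      exact ⟨U, hU, fun s t hst => h s t hst⟩⟩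

@[simp] lemma rAct_apply (n : LUCDual G) (f : ↥(LUC G)) (s : G) :
    ((rAct n f : ↥(LUC G)) : G →ᵇ ℂ) s = n (lTrans s f) := rfl

lemma rAct_norm_le (n : LUCDual G) (f : ↥(LUC G)) : ‖rAct n f‖ ≤ ‖n‖ * ‖f‖ := by
  have h0 : (0 : ℝ) ≤ ‖n‖ * ‖f‖ := by positivity
  show ‖((rAct n f : ↥(LUC G)) : G →ᵇ ℂ)‖ ≤ ‖n‖ * ‖f‖
  refine (BoundedContinuousFunction.norm_le h0).2 fun s => ?_
  calc ‖n (lTrans s f)‖ ≤ ‖n‖ * ‖lTrans s f‖ := n.le_opNorm _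
    _ ≤ ‖n‖ * ‖f‖ := mul_le_mul_of_nonneg_left (lTrans_norm_le s f) (norm_nonneg n)

lemma rAct_add (n : LUCDual G) (f g : ↥(LUC G)) :
    rAct n (f + g) = rAct n f + rAct n g := by
  apply Subtype.ext
  ext s
  simp [rAct_apply, lTrans_add, map_add]

lemma rAct_smul (n : LUCDual G) (c : ℂ) (f : ↥(LUC G)) :
    rAct n (c • f) = c • rAct n f := by
  apply Subtype.ext
  ext s
  simp [rAct_apply, lTrans_smul, _root_.map_smul]

/-- Convolution on `LUC(G)*`: `(m ∗ n)(f) = m (r_n f)`. -/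
def conv (m n : LUCDual G) : LUCDual G :=
  LinearMap.mkContinuous
    { toFun := fun f => m (rAct n f)
      map_add' := by
        intro f g
        show m (rAct n (f + g)) = m (rAct n f) + m (rAct n g)
        rw [rAct_add, map_add]
      map_smul' := by
        intro c f
        show m (rAct n (c • f)) = c • m (rAct n f)
        rw [rAct_smul, _root_.map_smul] }
    (‖m‖ * ‖n‖)
    (fun f => by
      calc ‖m (rAct n f)‖ ≤ ‖m‖ * ‖rAct n f‖ := m.le_opNorm _
        _ ≤ ‖m‖ * (‖n‖ * ‖f‖) :=
            mul_le_mul_of_nonneg_left (rAct_norm_le n f) (norm_nonneg m)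
        _ = ‖m‖ * ‖n‖ * ‖f‖ := by ring)

@[simp] lemma conv_apply (m n : LUCDual G) (f : ↥(LUC G)) :
    conv m n f = m (rAct n f) := rfl

variable (G) in
/-- Convergence of a net in the UEB topology on `LUC(G)*`:
uniform convergence on every equi-LUC set. -/
def UEBTendsto {ι : Type*} (l : Filter ι) (m : ι → LUCDual G) (m₀ : LUCDual G) : Prop :=
  ∀ F : Set ↥(LUC G), EquiLUC G F → ∀ ε > 0, ∀ᶠ i in l, ∀ f ∈ F, ‖m i f - m₀ f‖ < ε

variable (G) in
/-- The UEB topology on `LUC(G)*`: the topology of uniform convergence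
on the equi-LUC subsets of `LUC(G)`. -/
def UEBTop : TopologicalSpace (LUCDual G) :=
  ⨅ F : {F : Set ↥(LUC G) // EquiLUC G F},
    TopologicalSpace.induced
      (fun m => UniformFun.ofFun (fun f : F.1 => m f.1) : LUCDual G → UniformFun F.1 ℂ)
      inferInstance

end LUCSpace

/-!
Split `(m_α ∗ n_α)(f) - (m₀ ∗ n₀)(f)` as `(m_α - m₀)(r_{n_α} f) + m₀(r_{n_α} f - r_{n₀} f)`.
The first term is small uniformly in `f ∈ F` because `{r_n f : n ∈ B, f ∈ F}` is equi-LUC for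
norm-bounded `B`. The second is small because `‖r_{n_α} f - r_{n₀} f‖ = sup_s |(n_α - n₀)(ℓ_s f)|`
and, in a SIN group, the translates `{ℓ_s f : s ∈ G, f ∈ F}` are again equi-LUC.
-/

section Convolution

variable {G : Type*} [Group G] [TopologicalSpace G] [IsTopologicalGroup G]

lemma norm_lTrans_sub_lTrans_le {f : ↥(LUC G)} {U : Set G} {δ : ℝ}
    (hf : ∀ s t : G, s * t⁻¹ ∈ U → ‖(f : G →ᵇ ℂ) s - (f : G →ᵇ ℂ) t‖ < δ)
    {s t : G} (hst : s * t⁻¹ ∈ U) : ‖lTrans s f - lTrans t f‖ ≤ δ := by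
  refine (BoundedContinuousFunction.norm_le_of_nonempty).2 fun x => (hf _ _ ?_).le
  simpa [mul_assoc] using hst

lemma sub_rAct (n n' : LUCDual G) (f : ↥(LUC G)) :
    rAct (n - n') f = rAct n f - rAct n' f :=
  rfl

lemma norm_rAct_le_iff {n : LUCDual G} {f : ↥(LUC G)} {C : ℝ} :
    ‖rAct n f‖ ≤ C ↔ ∀ s, ‖n (lTrans s f)‖ ≤ C :=
  BoundedContinuousFunction.norm_le_of_nonempty

/-- `(ℓ_s f)(x) - (ℓ_s f)(y) = f(sx) - f(sy)` with `(sx)(sy)⁻¹ = s(xy⁻¹)s⁻¹`, so a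
conjugation-invariant neighbourhood gives a modulus that is uniform in `s`. -/
lemma EquiLUC.image2_lTrans (hSIN : IsSIN G) {F : Set ↥(LUC G)} (hF : EquiLUC G F) :
    EquiLUC G (Set.image2 lTrans Set.univ F) := by
  obtain ⟨⟨C, hC⟩, hFU⟩ := hF
  refine ⟨⟨C, ?_⟩, fun ε hε => ?_⟩
  · rintro _ ⟨s, -, f, hf, rfl⟩
    exact (lTrans_norm_le s f).trans (hC f hf)
  · obtain ⟨U, hU, hUF⟩ := hFU ε hε
    obtain ⟨V, hV, hVU, hVconj⟩ := hSIN U hU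
    refine ⟨V, hV, ?_⟩
    rintro _ ⟨s, -, f, hf, rfl⟩ x y hxy
    have hconj : (s * x) * (s * y)⁻¹ ∈ U := by
      simpa [mul_assoc] using hVU (hVconj s _ hxy)
    exact hUF f hf _ _ hconj

lemma EquiLUC.image2_rAct {B : Set (LUCDual G)} (hB : Bornology.IsBounded B)
    {F : Set ↥(LUC G)} (hF : EquiLUC G F) : EquiLUC G (Set.image2 rAct B F) := by
  obtain ⟨R, hR, hBR⟩ := hB.exists_pos_norm_le
  obtain ⟨⟨C, hC⟩, hFU⟩ := hF
  refine ⟨⟨R * C, ?_⟩, fun ε hε => ?_⟩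
  · rintro _ ⟨n, hn, f, hf, rfl⟩
    exact (rAct_norm_le n f).trans (mul_le_mul (hBR n hn) (hC f hf) (norm_nonneg f) hR.le)
  · obtain ⟨U, hU, hUF⟩ := hFU (ε / 2 / R) (by positivity)
    refine ⟨U, hU, ?_⟩
    rintro _ ⟨n, hn, f, hf, rfl⟩ s t hst
    calc ‖n (lTrans s f) - n (lTrans t f)‖ ≤ ‖n‖ * ‖lTrans s f - lTrans t f‖ := by
          rw [← map_sub]; exact n.le_opNorm _
      _ ≤ R * (ε / 2 / R) :=
          mul_le_mul (hBR n hn) (norm_lTrans_sub_lTrans_le (hUF f hf) hst) (norm_nonneg _) hR.le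
      _ < ε := by rw [mul_div_cancel₀ _ hR.ne']; linarith

lemma UEBTendsto.tendstoUniformlyOn_rAct (hSIN : IsSIN G) {ι : Type*} {l : Filter ι}
    {n : ι → LUCDual G} {n₀ : LUCDual G} (hn : UEBTendsto G l n n₀)
    {F : Set ↥(LUC G)} (hF : EquiLUC G F) :
    TendstoUniformlyOn (fun i f => rAct (n i) f) (rAct n₀) l F := by
  refine Metric.tendstoUniformlyOn_iff.2 fun ε hε => ?_
  filter_upwards [hn _ (hF.image2_lTrans hSIN) (ε / 2) (half_pos hε)] with i hi f hf
  rw [dist_comm, dist_eq_norm, ← sub_rAct]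
  refine (norm_rAct_le_iff.2 fun s => (hi _ (Set.mem_image2_of_mem trivial hf)).le).trans_lt ?_
  exact half_lt_self hε

end Convolution

theorem conv_UEB_jointly_continuous_at_SIN_general
    (G : Type*) [Group G] [TopologicalSpace G] [IsTopologicalGroup G]
    (hSIN : IsSIN G)
    {ι : Type*} (l : Filter ι)
    (mα nα : ι → LUCDual G) (m₀ n₀ : LUCDual G)
    (B : Set (LUCDual G)) (hBbdd : ∃ C, ∀ n ∈ B, ‖n‖ ≤ C)
    (hnB : ∀ i, nα i ∈ B)
    (hm : UEBTendsto G l mα m₀) (hn : UEBTendsto G l nα n₀) :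
    UEBTendsto G l (fun i => conv (mα i) (nα i)) (conv m₀ n₀) := by
  intro F hF ε hε
  have hB : Bornology.IsBounded B := isBounded_iff_forall_norm_le.2 hBbdd
  have hm₀ := Metric.tendstoUniformlyOn_iff.1
    (m₀.uniformContinuous.comp_tendstoUniformlyOn (hn.tendstoUniformlyOn_rAct hSIN hF))
    (ε / 2) (half_pos hε)
  filter_upwards [hm _ (hF.image2_rAct hB) (ε / 2) (half_pos hε), hm₀] with i hmi hm₀i f hf
  calc ‖conv (mα i) (nα i) f - conv m₀ n₀ f‖
      = ‖(mα i (rAct (nα i) f) - m₀ (rAct (nα i) f)) + (m₀ (rAct (nα i) f) - m₀ (rAct n₀ f))‖ := by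
        rw [conv_apply, conv_apply, sub_add_sub_cancel]
    _ ≤ ‖mα i (rAct (nα i) f) - m₀ (rAct (nα i) f)‖ + ‖m₀ (rAct (nα i) f) - m₀ (rAct n₀ f)‖ :=
        norm_add_le _ _
    _ < ε / 2 + ε / 2 := by
        refine add_lt_add (hmi _ (Set.mem_image2_of_mem (hnB i) hf)) ?_
        rw [← dist_eq_norm, dist_comm]
        exact hm₀i f hf
    _ = ε := add_halves ε

/-- **Theorem (paper Thm 5.4, case (b)).** In a SIN group, convolution on `LUC(G)*`
is jointly UEB continuous at `(m₀, n₀)` where the right arguments stay in a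
norm-bounded set `B`. -/
theorem conv_UEB_jointly_continuous_at_SIN
    (G : Type*) [Group G] [TopologicalSpace G] [IsTopologicalGroup G]
    (hSIN : IsSIN G)
    {ι : Type*} (l : Filter ι)
    (mα nα : ι → LUCDual G) (m₀ n₀ : LUCDual G)
    (B : Set (LUCDual G)) (hBbdd : ∃ C, ∀ n ∈ B, ‖n‖ ≤ C)
    (hn₀ : n₀ ∈ B) (hnB : ∀ i, nα i ∈ B)
    (hm : UEBTendsto G l mα m₀) (hn : UEBTendsto G l nα n₀) :
    UEBTendsto G l (fun i => conv (mα i) (nα i)) (conv m₀ n₀) :=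
  conv_UEB_jointly_continuous_at_SIN_general G hSIN l mα nα m₀ n₀ B hBbdd hnB hm hn
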